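/- If augmentations t₁,…,t_K are drawn uniformly at random, then the expectation over the augmentation choice of the stochastic log-likelihood gradient ∇_θ log p(y | t_J(x), θ) (J uniform on {1,…,K}) equals ∑_{j=1}^K ∇_θ log p(y | t_j(x), θ)^{1/K}; consequently the stationary distribution of SGLD with per-step random augmentation is proportional to p(θ) ∏_{i=1}^N ∏_{j=1}^K p(y_i | t_j(x_i), θ)^{1/K}, a 1/K-power (temperature K) tempered likelihood over the augmented dataset. -/

import Mathlib

open Real Finset

/-! Both claims are pointwise consequences of `log (x ^ r) = r * log x` for `x > 0`: the gradient
of the tempered log-likelihood is `1/K` times the gradient of the log-likelihood (scaling by a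
constant commutes with `fderiv`), and exponentiating the averaged
log-likelihood turns each `(1/K) * log p` into `p ^ (1/K)`. -/

theorem fderiv_log_rpow_of_pos {E : Type*} [NormedAddCommGroup E] [NormedSpace ℝ E]
    {f : E → ℝ} (hf : ∀ x, 0 < f x) (r : ℝ) (x : E) :
    fderiv ℝ (fun y => log (f y ^ r)) x = r • fderiv ℝ (fun y => log (f y)) x := by
  have hscale : (fun y => log (f y ^ r)) = r • fun y => log (f y) := by
    funext y
    rw [log_rpow (hf y), Pi.smul_apply, smul_eq_mul]
  rw [hscale, fderiv_const_smul_field]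
  rfl

theorem smul_sum_fderiv_log_eq_sum_fderiv_log_rpow {ι E : Type*} [NormedAddCommGroup E]
    [NormedSpace ℝ E] (s : Finset ι) {f : ι → E → ℝ} (hf : ∀ j x, 0 < f j x) (r : ℝ) (x : E) :
    r • ∑ j ∈ s, fderiv ℝ (fun y => log (f j y)) x =
      ∑ j ∈ s, fderiv ℝ (fun y => log (f j y ^ r)) x := by
  rw [smul_sum]
  exact sum_congr rfl fun j _ => (fderiv_log_rpow_of_pos (hf j) r x).symm

theorem exp_mul_sum_log_eq_prod_rpow {ι : Type*} (s : Finset ι) {f : ι → ℝ}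
    (hf : ∀ j, 0 < f j) (r : ℝ) :
    exp (r * ∑ j ∈ s, log (f j)) = ∏ j ∈ s, f j ^ r := by
  rw [mul_sum, exp_sum]
  exact prod_congr rfl fun j _ => by rw [rpow_def_of_pos (hf j), mul_comm]

theorem sgld_augmentation_tempering_general {d N K : ℕ}
    (p : Fin N → Fin K → (Fin d → ℝ) → ℝ) (prior : (Fin d → ℝ) → ℝ)
    (hp : ∀ i j θ, 0 < p i j θ) (hprior : ∀ θ, 0 < prior θ) :
    (∀ (i : Fin N) (θ : Fin d → ℝ),
        (1 / (K : ℝ)) • ∑ j, fderiv ℝ (fun θ' => Real.log (p i j θ')) θ =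
          ∑ j, fderiv ℝ (fun θ' => Real.log ((p i j θ') ^ ((1 : ℝ) / K))) θ) ∧
    (∀ θ : Fin d → ℝ,
        Real.exp (Real.log (prior θ) + ∑ i, (1 / (K : ℝ)) * ∑ j, Real.log (p i j θ)) =
          prior θ * ∏ i, ∏ j, (p i j θ) ^ ((1 : ℝ) / K)) := by
  refine ⟨fun i θ => smul_sum_fderiv_log_eq_sum_fderiv_log_rpow _ (hp i) _ θ, fun θ => ?_⟩
  rw [exp_add, exp_log (hprior θ), exp_sum]
  congr 1
  exact prod_congr rfl fun i _ => exp_mul_sum_log_eq_prod_rpow _ (fun j => hp i j θ) _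

/-- With a finite set of `K` augmentations sampled uniformly, the expectation over the
augmentation choice of the stochastic log-likelihood gradient equals the sum of the
gradients of the `1/K`-tempered log-likelihoods; consequently the stationary distribution
of SGLD with per-step random augmentation is proportional to
`prior θ * ∏ᵢ ∏ⱼ p(yᵢ | tⱼ(xᵢ), θ)^{1/K}`, a temperature-`K` tempered likelihood over the
augmented dataset. -/
theorem sgld_augmentation_tempering {d N K : ℕ} (hK : 0 < K)
    (p : Fin N → Fin K → (Fin d → ℝ) → ℝ) (prior : (Fin d → ℝ) → ℝ)
    (hp : ∀ i j θ, 0 < p i j θ) (hprior : ∀ θ, 0 < prior θ)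
    (hdiff : ∀ i j θ, DifferentiableAt ℝ (fun θ' => Real.log (p i j θ')) θ) :
    (∀ (i : Fin N) (θ : Fin d → ℝ),
        (1 / (K : ℝ)) • ∑ j, fderiv ℝ (fun θ' => Real.log (p i j θ')) θ =
          ∑ j, fderiv ℝ (fun θ' => Real.log ((p i j θ') ^ ((1 : ℝ) / K))) θ) ∧
    (∀ θ : Fin d → ℝ,
        Real.exp (Real.log (prior θ) + ∑ i, (1 / (K : ℝ)) * ∑ j, Real.log (p i j θ)) =
          prior θ * ∏ i, ∏ j, (p i j θ) ^ ((1 : ℝ) / K)) :=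
  sgld_augmentation_tempering_general p prior hp hprior
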